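/- The largest eigenvalue of the adjacency matrix of S_{n,k} (the join of K_k and an independent set of size n−k, with n ≥ k ≥ 1) equals (k−1)/2 + sqrt(k·n − (3k² + 2k − 1)/4). -/

import Mathlib

open Matrix Finset BigOperators

/-- A graph is `k`-degenerate if every nonempty (induced) subgraph has a vertex
of degree at most `k` within it. -/
def SimpleGraph.Degenerate {V : Type*} (k : ℕ) (G : SimpleGraph V) : Prop :=
  ∀ s : Finset V, s.Nonempty → ∃ v ∈ s, {u ∈ (s : Set V) | G.Adj v u}.ncard ≤ k

/-- `SGraph n k`: the join of a complete graph on the first `k` vertices with an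
independent set on the remaining `n - k` vertices (the graph `S_{n,k}`). -/
def SGraph (n k : ℕ) : SimpleGraph (Fin n) where
  Adj u v := u ≠ v ∧ ((u : ℕ) < k ∨ (v : ℕ) < k)
  symm := by refine ⟨?_⟩; intro u v h; exact ⟨h.1.symm, h.2.symm⟩
  loopless := by refine ⟨?_⟩; intro u h; exact h.1 rfl

instance (n k : ℕ) : DecidableRel (SGraph n k).Adj := fun u v => by
  unfold SGraph; infer_instance

/-- The signless Laplacian `Q = D + A` as a real matrix. -/
noncomputable def signlessLaplacian {n : ℕ} (G : SimpleGraph (Fin n)) :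
    Matrix (Fin n) (Fin n) ℝ :=
  letI : DecidableRel G.Adj := Classical.decRel _
  Matrix.diagonal (fun v => (G.degree v : ℝ)) + G.adjMatrix ℝ

theorem signlessLaplacian_isHermitian {n : ℕ} (G : SimpleGraph (Fin n)) :
    (signlessLaplacian G).IsHermitian := by
  letI : DecidableRel G.Adj := Classical.decRel _
  unfold signlessLaplacian
  refine (Matrix.isHermitian_diagonal _).add ?_
  rw [Matrix.IsHermitian, Matrix.conjTranspose_eq_transpose_of_trivial]
  exact SimpleGraph.isSymm_adjMatrix G

theorem adjMatrix_isHermitian {n : ℕ} (G : SimpleGraph (Fin n)) [DecidableRel G.Adj] :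
    (G.adjMatrix ℝ).IsHermitian := by
  rw [Matrix.IsHermitian, Matrix.conjTranspose_eq_transpose_of_trivial]
  exact SimpleGraph.isSymm_adjMatrix G

/-- The largest adjacency eigenvalue `μ(G)`. -/
noncomputable def muIndex {n : ℕ} (G : SimpleGraph (Fin n)) : ℝ :=
  letI : DecidableRel G.Adj := Classical.decRel _
  ⨆ i, (adjMatrix_isHermitian G).eigenvalues i

/-- The largest signless Laplacian eigenvalue `q(G)` (the `Q`-index). -/
noncomputable def qIndex {n : ℕ} (G : SimpleGraph (Fin n)) : ℝ :=
  ⨆ i, (signlessLaplacian_isHermitian G).eigenvalues i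


/-! The indicator vectors `χK` of the clique and `χI` of the independent set span a subspace
invariant under the adjacency matrix `A`, on which `A` acts by `[[k-1, n-k], [k, 0]]`; its larger
eigenvalue is the larger root `μ` of `x² = (k-1)x + k(n-k)`, with eigenvector `μ χK + k χI`
(or `χK` when the graph is complete). Conversely, if `A v = x v` with `v ≠ 0`, symmetry of `A`
gives `x α = (k-1) α + k β` and `x β = (n-k) α` for `α = χK ⬝ v`, `β = χI ⬝ v`. Unless `x` is a
root of the quadratic this forces `α = β = 0`, and then `A v = -(χK * v)` leaves only `x = 0`
or `x = -1`. -/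

namespace Matrix

variable {K n : Type*} [Field K] [Fintype n] [DecidableEq n]

theorem mem_spectrum_iff_exists_mulVec_eq_smul {A : Matrix n n K} {μ : K} :
    μ ∈ spectrum K A ↔ ∃ v, v ≠ 0 ∧ A *ᵥ v = μ • v := by
  rw [← spectrum_toLin', ← Module.End.hasEigenvalue_iff_mem_spectrum]
  constructor
  · intro h
    obtain ⟨v, hv, hv0⟩ := h.exists_hasEigenvector
    exact ⟨v, hv0, Module.End.mem_eigenspace_iff.mp hv⟩
  · rintro ⟨v, hv0, hv⟩
    exact Module.End.hasEigenvalue_of_hasEigenvector ⟨Module.End.mem_eigenspace_iff.mpr hv, hv0⟩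

end Matrix

theorem muIndex_eq_of_isGreatest {n : ℕ} (G : SimpleGraph (Fin n)) [DecidableRel G.Adj] {μ : ℝ}
    (h : IsGreatest (spectrum ℝ (G.adjMatrix ℝ)) μ) : muIndex G = μ := by
  rw [(adjMatrix_isHermitian G).spectrum_real_eq_range_eigenvalues] at h
  rw [← h.csSup_eq, muIndex, iSup]
  congr!

theorem le_half_add_sqrt {b c : ℝ} (hc : 0 ≤ c) : b ≤ b / 2 + √(b ^ 2 / 4 + c) := by
  have : |b / 2| ≤ √(b ^ 2 / 4 + c) := by
    rw [← Real.sqrt_sq_eq_abs]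
    gcongr
    linarith
  linarith [le_abs_self (b / 2)]

theorem half_add_sqrt_sq {b c : ℝ} (h : 0 ≤ b ^ 2 / 4 + c) :
    (b / 2 + √(b ^ 2 / 4 + c)) ^ 2 = b * (b / 2 + √(b ^ 2 / 4 + c)) + c := by
  linear_combination Real.sq_sqrt h

theorem le_half_add_sqrt_of_sq_eq {b c x : ℝ} (hx : x ^ 2 = b * x + c) :
    x ≤ b / 2 + √(b ^ 2 / 4 + c) := by
  have : b ^ 2 / 4 + c = (x - b / 2) ^ 2 := by linear_combination -hx
  rw [this, Real.sqrt_sq_eq_abs]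
  linarith [le_abs_self (x - b / 2)]

namespace SGraph

variable {n k : ℕ}

def cliqueIndicator (n k : ℕ) : Fin n → ℝ := fun u => if (u : ℕ) < k then 1 else 0

def indepIndicator (n k : ℕ) : Fin n → ℝ := fun u => if (u : ℕ) < k then 0 else 1

local notation "χK" => cliqueIndicator n k
local notation "χI" => indepIndicator n k

theorem cliqueIndicator_add_indepIndicator : χK + χI = 1 := by
  ext u
  simp only [cliqueIndicator, indepIndicator, Pi.add_apply, Pi.one_apply]
  split_ifs <;> simp

theorem cliqueIndicator_mul_self : χK * χK = χK := by
  ext u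
  simp only [cliqueIndicator, Pi.mul_apply]
  split_ifs <;> simp

theorem cliqueIndicator_mul_indepIndicator : χK * χI = 0 := by
  ext u
  simp only [cliqueIndicator, indepIndicator, Pi.mul_apply, Pi.zero_apply]
  split_ifs <;> simp

theorem indepIndicator_eq_zero (hnk : n ≤ k) : χI = 0 := by
  ext u
  simp [indepIndicator, u.isLt.trans_le hnk]

theorem cliqueIndicator_dotProduct_indepIndicator : χK ⬝ᵥ χI = 0 := by
  change ∑ u, (χK * χI) u = 0
  rw [cliqueIndicator_mul_indepIndicator]
  simp

theorem indepIndicator_dotProduct_cliqueIndicator : χI ⬝ᵥ χK = 0 := by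
  rw [dotProduct_comm, cliqueIndicator_dotProduct_indepIndicator]

theorem cliqueIndicator_dotProduct_self (hkn : k ≤ n) : χK ⬝ᵥ χK = k := by
  change ∑ u, (χK * χK) u = k
  rw [cliqueIndicator_mul_self]
  simp [cliqueIndicator, Finset.sum_boole, Fin.card_filter_val_lt, hkn]

theorem indepIndicator_dotProduct_self (hkn : k ≤ n) : χI ⬝ᵥ χI = n - k := by
  have h := one_dotProduct_one (α := ℝ) (n := Fin n)
  rw [← cliqueIndicator_add_indepIndicator (k := k)] at h
  simp only [add_dotProduct, dotProduct_add, cliqueIndicator_dotProduct_indepIndicator,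
    indepIndicator_dotProduct_cliqueIndicator, cliqueIndicator_dotProduct_self hkn,
    Fintype.card_fin] at h
  linarith

theorem adjMatrix_eq :
    (SGraph n k).adjMatrix ℝ = vecMulVec 1 χK + vecMulVec χK χI - diagonal χK := by
  ext u v
  rw [SimpleGraph.adjMatrix_apply]
  by_cases hu : (u : ℕ) < k <;> by_cases hv : (v : ℕ) < k <;> by_cases huv : u = v <;>
    simp [SGraph, vecMulVec_apply, cliqueIndicator, indepIndicator, hu, hv, huv]

theorem adjMatrix_mulVec (x : Fin n → ℝ) :
    (SGraph n k).adjMatrix ℝ *ᵥ x = (χK ⬝ᵥ x) • 1 + (χI ⬝ᵥ x) • χK - χK * x := by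
  rw [adjMatrix_eq, sub_mulVec, add_mulVec, vecMulVec_mulVec, vecMulVec_mulVec]
  ext u
  simp [mulVec_diagonal]

theorem adjMatrix_mulVec_cliqueIndicator (hkn : k ≤ n) :
    (SGraph n k).adjMatrix ℝ *ᵥ χK = ((k : ℝ) - 1) • χK + (k : ℝ) • χI := by
  rw [adjMatrix_mulVec, cliqueIndicator_dotProduct_self hkn,
    indepIndicator_dotProduct_cliqueIndicator, cliqueIndicator_mul_self,
    ← cliqueIndicator_add_indepIndicator]
  module

theorem adjMatrix_mulVec_indepIndicator (hkn : k ≤ n) :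
    (SGraph n k).adjMatrix ℝ *ᵥ χI = ((n : ℝ) - k) • χK := by
  rw [adjMatrix_mulVec, cliqueIndicator_dotProduct_indepIndicator,
    indepIndicator_dotProduct_self hkn, cliqueIndicator_mul_indepIndicator]
  module

theorem eq_zero_or_eq_neg_one_or_sq_eq_of_mem_spectrum (hkn : k ≤ n) {x : ℝ}
    (hx : x ∈ spectrum ℝ ((SGraph n k).adjMatrix ℝ)) :
    x = 0 ∨ x = -1 ∨ x ^ 2 = ((k : ℝ) - 1) * x + k * (n - k) := by
  obtain ⟨v, hv0, hv⟩ := mem_spectrum_iff_exists_mulVec_eq_smul.mp hx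
  have hsymm (w : Fin n → ℝ) :
      w ⬝ᵥ (SGraph n k).adjMatrix ℝ *ᵥ v = (SGraph n k).adjMatrix ℝ *ᵥ w ⬝ᵥ v := by
    rw [dotProduct_mulVec, ← mulVec_transpose, SimpleGraph.transpose_adjMatrix]
  have hα : x * (χK ⬝ᵥ v) = ((k : ℝ) - 1) * (χK ⬝ᵥ v) + k * (χI ⬝ᵥ v) := by
    simpa [hv, adjMatrix_mulVec_cliqueIndicator hkn, add_dotProduct] using hsymm χK
  have hβ : x * (χI ⬝ᵥ v) = ((n : ℝ) - k) * (χK ⬝ᵥ v) := by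
    simpa [hv, adjMatrix_mulVec_indepIndicator hkn] using hsymm χI
  by_cases hq : x ^ 2 = ((k : ℝ) - 1) * x + k * (n - k)
  · exact Or.inr (Or.inr hq)
  have hq' : x ^ 2 - ((k : ℝ) - 1) * x - k * (n - k) ≠ 0 := fun h => hq (by linear_combination h)
  have hα0 : χK ⬝ᵥ v = 0 :=
    (mul_eq_zero.mp (by linear_combination x * hα + k * hβ)).resolve_left hq'
  have hβ0 : χI ⬝ᵥ v = 0 := by
    refine (mul_eq_zero.mp ?_).resolve_left hq'
    linear_combination ((n : ℝ) - k) * hα + (x - (k - 1)) * hβ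
  obtain ⟨u, hu⟩ : ∃ u, v u ≠ 0 := by
    by_contra! h
    exact hv0 (funext h)
  have hvu := congrFun hv u
  simp only [adjMatrix_mulVec, hα0, hβ0, zero_smul, zero_add, zero_sub, Pi.neg_apply,
    Pi.mul_apply, Pi.smul_apply, smul_eq_mul, cliqueIndicator] at hvu
  split_ifs at hvu
  · exact Or.inr (Or.inl (mul_right_cancel₀ hu (by linarith)))
  · exact Or.inl (mul_right_cancel₀ hu (by linarith))

theorem mem_spectrum_adjMatrix (hk : 1 ≤ k) (hkn : k ≤ n) {μ : ℝ}
    (hμ : μ ^ 2 = ((k : ℝ) - 1) * μ + k * (n - k)) (hμk : (k : ℝ) - 1 ≤ μ) :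
    μ ∈ spectrum ℝ ((SGraph n k).adjMatrix ℝ) := by
  rw [mem_spectrum_iff_exists_mulVec_eq_smul]
  rcases hkn.lt_or_eq with hlt | heq
  · refine ⟨μ • χK + (k : ℝ) • χI, fun h => ?_, ?_⟩
    · have := congrFun h ⟨k, hlt⟩
      simp [cliqueIndicator, indepIndicator] at this
      omega
    · rw [mulVec_add, mulVec_smul, mulVec_smul, adjMatrix_mulVec_cliqueIndicator hkn,
        adjMatrix_mulVec_indepIndicator hkn]
      match_scalars
      · linear_combination -hμ
      · ring
  · have hμ' : μ = k - 1 := by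
      have hk0 : (0 : ℝ) ≤ k - 1 := by simp [hk]
      rw [← heq, sub_self, mul_zero, add_zero] at hμ
      nlinarith
    refine ⟨χK, fun h => ?_, ?_⟩
    · have := congrFun h ⟨0, hk.trans hkn⟩
      simp [cliqueIndicator] at this
      omega
    · rw [adjMatrix_mulVec_cliqueIndicator hkn, indepIndicator_eq_zero heq.ge, hμ', smul_zero,
        add_zero]

end SGraph

theorem stmt4 (n k : ℕ) (hk : 1 ≤ k) (hkn : k ≤ n) :
    muIndex (SGraph n k) =
      ((k : ℝ) - 1) / 2 + Real.sqrt (k * n - (3 * (k : ℝ) ^ 2 + 2 * k - 1) / 4) := by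
  have hc : (0 : ℝ) ≤ k * (n - k) :=
    mul_nonneg k.cast_nonneg (sub_nonneg.mpr (by exact_mod_cast hkn))
  have hk1 : (0 : ℝ) ≤ k - 1 := sub_nonneg.mpr (by exact_mod_cast hk)
  have hrad : (k : ℝ) * n - (3 * (k : ℝ) ^ 2 + 2 * k - 1) / 4
      = ((k : ℝ) - 1) ^ 2 / 4 + k * (n - k) := by ring
  rw [hrad]
  have hμk := le_half_add_sqrt (b := (k : ℝ) - 1) hc
  apply muIndex_eq_of_isGreatest
  refine ⟨SGraph.mem_spectrum_adjMatrix hk hkn (half_add_sqrt_sq (by positivity)) hμk,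
    fun x hx => ?_⟩
  rcases SGraph.eq_zero_or_eq_neg_one_or_sq_eq_of_mem_spectrum hkn hx with rfl | rfl | hx
  · linarith
  · linarith
  · exact le_half_add_sqrt_of_sq_eq hx
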